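/- Let $u:(x_*, 0)\to(0,\infty)$ satisfy $\frac{u''}{1+u'^2} = -\frac{2}{u} - \frac{2u'}{u^2}$ with $u' > 0$ and $u'' < 0$ on $(x_*,0)$, where $x_* < 0$ is finite. Then it is impossible that $u(x) \to 0$ as $x \to x_*^+$. Equivalently, a strictly increasing concave graph solution cannot emanate from height zero at a finite point. -/

import Mathlib

/-!
Along a solution, `F = arctan u' - 2/u` satisfies `F' = -2/u < 0`, so `F` decreases. Fixing a point
`a`, for `x < a` we get `F a < F x < π/2 - 2/u x`, i.e. `2/u x` stays below `π/2 - F a`, which is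
incompatible with `u x → 0⁺`.
-/

open Set Filter Topology

theorem hasDerivAt_arctan_deriv_sub_two_div {u : ℝ → ℝ} {x : ℝ} (hu : u x ≠ 0)
    (hdiff : DifferentiableAt ℝ u x) (hdiff' : DifferentiableAt ℝ (deriv u) x)
    (hode : deriv (deriv u) x / (1 + (deriv u x) ^ 2) = -2 / u x - 2 * deriv u x / (u x) ^ 2) :
    HasDerivAt (fun y => Real.arctan (deriv u y) - 2 / u y) (-2 / u x) x := by
  have h := hdiff'.hasDerivAt.arctan.sub ((hasDerivAt_const x (2 : ℝ)).div hdiff.hasDerivAt hu)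
  refine h.congr_deriv ?_
  rw [one_div_mul_eq_div, hode]
  field_simp
  ring

theorem strictAntiOn_arctan_deriv_sub_two_div {u : ℝ → ℝ} {a b : ℝ}
    (hpos : ∀ x ∈ Ioo a b, 0 < u x)
    (hdiff : ∀ x ∈ Ioo a b, DifferentiableAt ℝ u x)
    (hdiff' : ∀ x ∈ Ioo a b, DifferentiableAt ℝ (deriv u) x)
    (hode : ∀ x ∈ Ioo a b,
      deriv (deriv u) x / (1 + (deriv u x) ^ 2) = -2 / u x - 2 * deriv u x / (u x) ^ 2) :
    StrictAntiOn (fun y => Real.arctan (deriv u y) - 2 / u y) (Ioo a b) := by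
  have hF : ∀ x ∈ Ioo a b, HasDerivAt (fun y => Real.arctan (deriv u y) - 2 / u y) (-2 / u x) x :=
    fun x hx => hasDerivAt_arctan_deriv_sub_two_div (hpos x hx).ne' (hdiff x hx) (hdiff' x hx)
      (hode x hx)
  refine strictAntiOn_of_deriv_neg (convex_Ioo a b)
    (fun x hx => (hF x hx).continuousAt.continuousWithinAt) fun x hx => ?_
  rw [interior_Ioo] at hx
  rw [(hF x hx).deriv, neg_div]
  exact neg_neg_of_pos (div_pos two_pos (hpos x hx))

theorem stmt11_general (xstar : ℝ) (hx : xstar < 0) (u : ℝ → ℝ)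
    (hpos : ∀ x ∈ Ioo xstar 0, 0 < u x)
    (hdiff : ∀ x ∈ Ioo xstar 0, DifferentiableAt ℝ u x)
    (hdiff' : ∀ x ∈ Ioo xstar 0, DifferentiableAt ℝ (deriv u) x)
    (hode : ∀ x ∈ Ioo xstar 0,
      deriv (deriv u) x / (1 + (deriv u x) ^ 2) = -2 / u x - 2 * deriv u x / (u x) ^ 2)
    (hlim : Tendsto u (nhdsWithin xstar (Ioi xstar)) (nhds 0)) :
    False := by
  set F := fun y => Real.arctan (deriv u y) - 2 / u y
  have hanti : StrictAntiOn F (Ioo xstar 0) :=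
    strictAntiOn_arctan_deriv_sub_two_div hpos hdiff hdiff' hode
  have ha : xstar / 2 ∈ Ioo xstar 0 := ⟨by linarith, by linarith⟩
  have hnear : ∀ᶠ x in 𝓝[>] xstar, x ∈ Ioo xstar (xstar / 2) :=
    Ioo_mem_nhdsGT ha.1
  have hu_inv : Tendsto (fun x => (u x)⁻¹) (𝓝[>] xstar) atTop :=
    (tendsto_nhdsWithin_iff.2 ⟨hlim, hnear.mono fun x hx =>
      hpos x ⟨hx.1, hx.2.trans ha.2⟩⟩).inv_tendsto_nhdsGT_zero
  obtain ⟨x, hx_big, hx_mem⟩ :=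
    ((hu_inv.eventually_gt_atTop ((Real.pi / 2 - F (xstar / 2)) / 2)).and hnear).exists
  have hFx : F (xstar / 2) < F x := hanti ⟨hx_mem.1, hx_mem.2.trans ha.2⟩ ha hx_mem.2
  have harctan := Real.arctan_lt_pi_div_two (deriv u x)
  simp only [F, div_eq_mul_inv] at hFx hx_big
  linarith

/-- A strictly increasing, strictly concave positive solution of
`u''/(1+u'^2) = -2/u - 2u'/u²` on `(x_*, 0)` with `x_*` finite cannot emanate from height zero
at `x_*`. -/
theorem stmt11 (xstar : ℝ) (hx : xstar < 0) (u : ℝ → ℝ)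
    (hpos : ∀ x ∈ Ioo xstar 0, 0 < u x)
    (hdiff : ∀ x ∈ Ioo xstar 0, DifferentiableAt ℝ u x)
    (hdiff' : ∀ x ∈ Ioo xstar 0, DifferentiableAt ℝ (deriv u) x)
    (hode : ∀ x ∈ Ioo xstar 0,
      deriv (deriv u) x / (1 + (deriv u x) ^ 2) = -2 / u x - 2 * deriv u x / (u x) ^ 2)
    (hinc : ∀ x ∈ Ioo xstar 0, 0 < deriv u x)
    (hconc : ∀ x ∈ Ioo xstar 0, deriv (deriv u) x < 0)
    (hlim : Tendsto u (nhdsWithin xstar (Ioi xstar)) (nhds 0)) :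
    False :=
  stmt11_general xstar hx u hpos hdiff hdiff' hode hlim
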